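/- arXiv:2108.04291 — 6 statements merged into one kernel-verified Lean document; each statement's English description precedes it below -/
import Mathlib

section
/- The unique minimizer of the functional J(a) = -Φ₀∫₀ᵀ aₜ dt + (1/(2α))∫₀ᵀ aₜ² dt + (1/(2Λ))∫₀ᵀ (∫ₜᵀ aᵤ du)² dt over a ∈ L²([0,T]) is â·Φ₀ where âₜ = α·cosh(√ρ(T-t))/cosh(√ρ T) with ρ = α/Λ, and the minimum value equals -Φ₀²·Λ√ρ·tanh(√ρ T)/2. -/
/-!
`J` is quadratic. Writing `B a t = ∫ₜᵀ a`, for `g = Φ₀ â` one has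
`J (g + d) = J g + (α⁻¹ ∫ g d + Λ⁻¹ ∫ (B g) (B d) - Φ₀ ∫ d) + Q d`, where
`Q d = (1/(2α)) ∫ d² + (1/(2Λ)) ∫ (B d)²` is nonnegative and vanishes only for `d = 0` a.e.
The middle term vanishes for every `d`: by Fubini `∫ (B â) (B d) = ∫ (∫₀ᵘ B â) d(u) du`, and
`Λ⁻¹ ∫₀ᵘ B â = 1 - cosh (√ρ (T - u)) / cosh (√ρ T) = 1 - α⁻¹ â u`.
Taking `d = g` in this identity gives `J g = -(Φ₀ / 2) ∫ g = -Φ₀² Λ √ρ tanh (√ρ T) / 2`.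
-/

open Real MeasureTheory Set

noncomputable def tailIntegral (T : ℝ) (a : ℝ → ℝ) (t : ℝ) : ℝ := ∫ u in t..T, a u

theorem tailIntegral_const_mul (T c : ℝ) (a : ℝ → ℝ) (t : ℝ) :
    tailIntegral T (fun u => c * a u) t = c * tailIntegral T a t :=
  intervalIntegral.integral_const_mul c a

theorem continuousOn_tailIntegral {T : ℝ} {a : ℝ → ℝ} (ha : IntervalIntegrable a volume 0 T) :
    ContinuousOn (tailIntegral T a) (uIcc 0 T) :=
  intervalIntegral.continuousOn_primitive_interval_left ((intervalIntegrable_iff').1 ha)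

theorem tailIntegral_add {T t : ℝ} {a b : ℝ → ℝ} (ha : IntervalIntegrable a volume 0 T)
    (hb : IntervalIntegrable b volume 0 T) (ht : t ∈ uIcc 0 T) :
    tailIntegral T (fun u => a u + b u) t = tailIntegral T a t + tailIntegral T b t := by
  have hsub : uIcc t T ⊆ uIcc 0 T := uIcc_subset_uIcc ht right_mem_uIcc
  exact intervalIntegral.integral_add (ha.mono_set hsub) (hb.mono_set hsub)

theorem integral_mul_tailIntegral {T : ℝ} (hT : 0 ≤ T) {s h : ℝ → ℝ}
    (hs : IntervalIntegrable s volume 0 T) (hh : IntervalIntegrable h volume 0 T) :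
    ∫ t in (0:ℝ)..T, s t * tailIntegral T h t
      = ∫ u in (0:ℝ)..T, (∫ t in (0:ℝ)..u, s t) * h u := by
  rw [intervalIntegrable_iff_integrableOn_Ioc_of_le hT] at hs hh
  set μ := volume.restrict (Ioc (0:ℝ) T)
  set F : ℝ → ℝ → ℝ := fun t u =>
    {z : ℝ × ℝ | z.1 < z.2}.indicator (fun z => s z.1 * h z.2) (t, u)
  have hF : Integrable (Function.uncurry F) (μ.prod μ) :=
    (hs.mul_prod hh).indicator (measurableSet_lt measurable_fst measurable_snd)
  have hleft : ∫ t, ∫ u, F t u ∂μ ∂μ = ∫ t in (0:ℝ)..T, s t * tailIntegral T h t := by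
    rw [intervalIntegral.integral_of_le hT]
    refine setIntegral_congr_fun measurableSet_Ioc fun t ht => ?_
    have hsec : (fun u => F t u) = (Ioi t).indicator (fun u => s t * h u) := by
      ext u; by_cases htu : t < u <;> simp [F, htu]
    have hset : Ioi t ∩ Ioc 0 T = Ioc t T := by
      ext x; simp only [mem_inter_iff, mem_Ioi, mem_Ioc]; grind [ht.1]
    rw [hsec, integral_indicator measurableSet_Ioi, Measure.restrict_restrict measurableSet_Ioi,
      hset, tailIntegral, intervalIntegral.integral_of_le ht.2, integral_const_mul]
  have hright : ∫ u, ∫ t, F t u ∂μ ∂μ = ∫ u in (0:ℝ)..T, (∫ t in (0:ℝ)..u, s t) * h u := by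
    rw [intervalIntegral.integral_of_le hT]
    refine setIntegral_congr_fun measurableSet_Ioc fun u hu => ?_
    have hsec : (fun t => F t u) = (Iio u).indicator (fun t => s t * h u) := by
      ext t; by_cases htu : t < u <;> simp [F, htu]
    have hset : Iio u ∩ Ioc 0 T = Ioo 0 u := by
      ext x; simp only [mem_inter_iff, mem_Iio, mem_Ioc, mem_Ioo]; grind [hu.2]
    rw [hsec, integral_indicator measurableSet_Iio, Measure.restrict_restrict measurableSet_Iio,
      hset, intervalIntegral.integral_of_le hu.1.le, integral_Ioc_eq_integral_Ioo,
      integral_mul_const]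
  rw [← hleft, ← hright, integral_integral_swap hF]

theorem Continuous.memLp_restrict_Icc {f : ℝ → ℝ} (hf : Continuous f) (p : ENNReal) (a b : ℝ) :
    MemLp f p (volume.restrict (Icc a b)) := by
  obtain ⟨C, hC⟩ := isCompact_Icc.exists_bound_of_continuousOn hf.continuousOn
  refine MemLp.of_bound hf.aestronglyMeasurable.restrict C ?_
  filter_upwards [self_mem_ae_restrict measurableSet_Icc] with x hx using hC x hx

theorem integral_add_sq {μ : Measure ℝ} {a b : ℝ} {f g : ℝ → ℝ}
    (hf : IntervalIntegrable (fun t => f t ^ 2) μ a b)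
    (hfg : IntervalIntegrable (fun t => f t * g t) μ a b)
    (hg : IntervalIntegrable (fun t => g t ^ 2) μ a b) :
    ∫ t in a..b, (f t + g t) ^ 2 ∂μ
      = (∫ t in a..b, f t ^ 2 ∂μ) + 2 * (∫ t in a..b, f t * g t ∂μ) + ∫ t in a..b, g t ^ 2 ∂μ := by
  rw [← intervalIntegral.integral_const_mul, ← intervalIntegral.integral_add hf (hfg.const_mul 2),
    ← intervalIntegral.integral_add (hf.add (hfg.const_mul 2)) hg]
  exact intervalIntegral.integral_congr fun t _ => by ring

-- `cost T α Λ 0` is the quadratic part `Q` of the functional.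
noncomputable def cost (T α Λ Φ₀ : ℝ) (a : ℝ → ℝ) : ℝ :=
  -Φ₀ * (∫ t in (0:ℝ)..T, a t) + (1 / (2 * α)) * (∫ t in (0:ℝ)..T, (a t) ^ 2)
    + (1 / (2 * Λ)) * (∫ t in (0:ℝ)..T, (tailIntegral T a t) ^ 2)

theorem cost_add {T : ℝ} (hT : 0 ≤ T) (α Λ Φ₀ : ℝ) {g d : ℝ → ℝ}
    (hg : MemLp g 2 (volume.restrict (Icc 0 T))) (hd : MemLp d 2 (volume.restrict (Icc 0 T))) :
    cost T α Λ Φ₀ (fun t => g t + d t)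
      = cost T α Λ Φ₀ g
        + (α⁻¹ * (∫ t in (0:ℝ)..T, g t * d t)
            + Λ⁻¹ * (∫ t in (0:ℝ)..T, tailIntegral T g t * tailIntegral T d t)
            - Φ₀ * ∫ t in (0:ℝ)..T, d t)
        + cost T α Λ 0 d := by
  have hinterval {f : ℝ → ℝ} (hf : IntegrableOn f (Icc 0 T)) : IntervalIntegrable f volume 0 T :=
    (intervalIntegrable_iff_integrableOn_Icc_of_le hT).2 hf
  have hg₁ := hinterval (hg.integrable one_le_two)
  have hd₁ := hinterval (hd.integrable one_le_two)
  have htail_mul (f₁ f₂ : ℝ → ℝ) (h₁ : IntervalIntegrable f₁ volume 0 T)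
      (h₂ : IntervalIntegrable f₂ volume 0 T) :
      IntervalIntegrable (fun t => tailIntegral T f₁ t * tailIntegral T f₂ t) volume 0 T :=
    ((continuousOn_tailIntegral h₁).mul (continuousOn_tailIntegral h₂)).intervalIntegrable
  have hlin : ∫ t in (0:ℝ)..T, (g t + d t) = (∫ t in (0:ℝ)..T, g t) + ∫ t in (0:ℝ)..T, d t :=
    intervalIntegral.integral_add hg₁ hd₁
  have hsq := integral_add_sq (hinterval hg.integrable_sq) (hinterval (hg.integrable_mul hd))
    (hinterval hd.integrable_sq)
  have htail : ∫ t in (0:ℝ)..T, tailIntegral T (fun u => g u + d u) t ^ 2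
      = ∫ t in (0:ℝ)..T, (tailIntegral T g t + tailIntegral T d t) ^ 2 :=
    intervalIntegral.integral_congr fun t ht => by rw [tailIntegral_add hg₁ hd₁ ht]
  have htail_sq := integral_add_sq (by simpa only [sq] using htail_mul g g hg₁ hg₁)
    (htail_mul g d hg₁ hd₁) (by simpa only [sq] using htail_mul d d hd₁ hd₁)
  simp only [cost]
  rw [hlin, hsq, htail, htail_sq]
  ring

theorem cost_zero_nonneg {T α Λ : ℝ} (hT : 0 ≤ T) (hα : 0 ≤ α) (hΛ : 0 ≤ Λ) (d : ℝ → ℝ) :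
    0 ≤ cost T α Λ 0 d := by
  have hsq := intervalIntegral.integral_nonneg (μ := volume) hT fun t _ => sq_nonneg (d t)
  have htail := intervalIntegral.integral_nonneg (μ := volume) hT fun t _ =>
    sq_nonneg (tailIntegral T d t)
  simp only [cost, neg_zero, zero_mul, zero_add]
  positivity

theorem ae_eq_zero_of_cost_zero_eq_zero {T α Λ : ℝ} (hT : 0 ≤ T) (hα : 0 < α) (hΛ : 0 ≤ Λ)
    {d : ℝ → ℝ} (hd : MemLp d 2 (volume.restrict (Icc 0 T))) (h : cost T α Λ 0 d = 0) :
    ∀ᵐ t ∂(volume.restrict (Icc 0 T)), d t = 0 := by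
  have hsq := intervalIntegral.integral_nonneg (μ := volume) hT fun t _ => sq_nonneg (d t)
  have htail := intervalIntegral.integral_nonneg (μ := volume) hT fun t _ =>
    sq_nonneg (tailIntegral T d t)
  simp only [cost, neg_zero, zero_mul, zero_add] at h
  have hzero := ((add_eq_zero_iff_of_nonneg (by positivity) (by positivity)).1 h).1
  replace hzero := (mul_eq_zero.1 hzero).resolve_left (by positivity)
  rw [intervalIntegral.integral_of_le hT, ← integral_Icc_eq_integral_Ioc,
    integral_eq_zero_iff_of_nonneg (fun t => sq_nonneg (d t)) hd.integrable_sq] at hzero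
  filter_upwards [hzero] with t ht
  exact pow_eq_zero_iff two_ne_zero |>.1 ht

theorem integral_cosh_mul_sub {r : ℝ} (hr : r ≠ 0) (T a b : ℝ) :
    ∫ t in a..b, cosh (r * (T - t)) = (sinh (r * (T - a)) - sinh (r * (T - b))) / r := by
  have hderiv (t : ℝ) :
      HasDerivAt (fun t => -(sinh (r * (T - t)) / r)) (cosh (r * (T - t))) t := by
    refine ((((hasDerivAt_id' t).const_sub T).const_mul r).sinh.div_const r).neg.congr_deriv ?_
    field_simp
  rw [intervalIntegral.integral_eq_sub_of_hasDerivAt (fun t _ => hderiv t)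
    (Continuous.intervalIntegrable (by fun_prop) a b)]
  ring

theorem integral_sinh_mul_sub {r : ℝ} (hr : r ≠ 0) (T a b : ℝ) :
    ∫ t in a..b, sinh (r * (T - t)) = (cosh (r * (T - a)) - cosh (r * (T - b))) / r := by
  have hderiv (t : ℝ) :
      HasDerivAt (fun t => -(cosh (r * (T - t)) / r)) (sinh (r * (T - t))) t := by
    refine ((((hasDerivAt_id' t).const_sub T).const_mul r).cosh.div_const r).neg.congr_deriv ?_
    field_simp
  rw [intervalIntegral.integral_eq_sub_of_hasDerivAt (fun t _ => hderiv t)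
    (Continuous.intervalIntegrable (by fun_prop) a b)]
  ring

noncomputable def optimalControl (α r T t : ℝ) : ℝ := α * cosh (r * (T - t)) / cosh (r * T)

theorem continuous_optimalControl (α r T : ℝ) : Continuous (optimalControl α r T) := by
  unfold optimalControl; fun_prop

theorem tailIntegral_optimalControl {r : ℝ} (hr : r ≠ 0) (α T t : ℝ) :
    tailIntegral T (optimalControl α r T) t = α / (r * cosh (r * T)) * sinh (r * (T - t)) := by
  simp only [tailIntegral, optimalControl, mul_div_assoc, intervalIntegral.integral_const_mul,
    intervalIntegral.integral_div, integral_cosh_mul_sub hr, sub_self, mul_zero, sinh_zero,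
    sub_zero]
  field_simp

theorem integral_optimalControl {α Λ r : ℝ} (hr : r ≠ 0) (hrα : Λ * r ^ 2 = α) (T : ℝ) :
    ∫ t in (0:ℝ)..T, optimalControl α r T t = Λ * r * tanh (r * T) := by
  rw [← tailIntegral, tailIntegral_optimalControl hr, sub_zero, tanh_eq_sinh_div_cosh, ← hrα]
  field_simp

theorem optimalControl_stationary {T α Λ r : ℝ} (hT : 0 ≤ T) (hΛ : Λ ≠ 0) (hr : r ≠ 0)
    (hrα : Λ * r ^ 2 = α) (c : ℝ) {h : ℝ → ℝ} (hh : IntervalIntegrable h volume 0 T) :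
    α⁻¹ * (∫ t in (0:ℝ)..T, c * optimalControl α r T t * h t)
      + Λ⁻¹ * (∫ t in (0:ℝ)..T,
          tailIntegral T (fun u => c * optimalControl α r T u) t * tailIntegral T h t)
      = c * ∫ t in (0:ℝ)..T, h t := by
  set k := c * α / (r * cosh (r * T))
  have htail (t : ℝ) :
      tailIntegral T (fun u => c * optimalControl α r T u) t = k * sinh (r * (T - t)) := by
    rw [tailIntegral_const_mul, tailIntegral_optimalControl hr, ← mul_assoc, ← mul_div_assoc]
  have hprimitive (u : ℝ) : ∫ t in (0:ℝ)..u, k * sinh (r * (T - t))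
      = k * ((cosh (r * (T - 0)) - cosh (r * (T - u))) / r) := by
    rw [intervalIntegral.integral_const_mul, integral_sinh_mul_sub hr]
  simp_rw [htail]
  rw [integral_mul_tailIntegral hT (Continuous.intervalIntegrable (by fun_prop) 0 T) hh]
  simp_rw [hprimitive]
  rw [← intervalIntegral.integral_const_mul, ← intervalIntegral.integral_const_mul,
    ← intervalIntegral.integral_add, ← intervalIntegral.integral_const_mul]
  · refine intervalIntegral.integral_congr fun u _ => ?_
    simp only [optimalControl, k, sub_zero, ← hrα]
    field_simp
    ring
  · simpa only [mul_assoc] using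
      (hh.continuousOn_mul (continuous_optimalControl α r T).continuousOn).const_mul (α⁻¹ * c)
  · exact (hh.continuousOn_mul (by fun_prop)).const_mul _

theorem cost_optimalControl {T α Λ r : ℝ} (hT : 0 ≤ T) (hΛ : Λ ≠ 0) (hr : r ≠ 0)
    (hrα : Λ * r ^ 2 = α) (Φ₀ : ℝ) :
    cost T α Λ Φ₀ (fun t => Φ₀ * optimalControl α r T t)
      = -Φ₀ ^ 2 * (Λ * r * tanh (r * T) / 2) := by
  have hstat := optimalControl_stationary hT hΛ hr hrα Φ₀
    (((continuous_optimalControl α r T).const_mul Φ₀).intervalIntegrable 0 T)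
  have hint : ∫ t in (0:ℝ)..T, Φ₀ * optimalControl α r T t = Φ₀ * (Λ * r * tanh (r * T)) := by
    rw [intervalIntegral.integral_const_mul, integral_optimalControl hr hrα]
  simp only [cost, sq]
  linear_combination (1 / 2) * hstat - (Φ₀ / 2) * hint

theorem cost_eq_cost_optimalControl_add {T α Λ r : ℝ} (hT : 0 ≤ T) (hΛ : Λ ≠ 0) (hr : r ≠ 0)
    (hrα : Λ * r ^ 2 = α) (Φ₀ : ℝ) {a : ℝ → ℝ} (ha : MemLp a 2 (volume.restrict (Icc 0 T))) :
    cost T α Λ Φ₀ a = cost T α Λ Φ₀ (fun t => Φ₀ * optimalControl α r T t)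
      + cost T α Λ 0 (fun t => a t - Φ₀ * optimalControl α r T t) := by
  have hg : MemLp (fun t => Φ₀ * optimalControl α r T t) 2 (volume.restrict (Icc 0 T)) :=
    ((continuous_optimalControl α r T).const_mul Φ₀).memLp_restrict_Icc 2 0 T
  have hd : MemLp (fun t => a t - Φ₀ * optimalControl α r T t) 2 (volume.restrict (Icc 0 T)) :=
    ha.sub hg
  have hstat := optimalControl_stationary hT hΛ hr hrα Φ₀
    ((intervalIntegrable_iff_integrableOn_Icc_of_le hT).2 (hd.integrable one_le_two))
  have hsplit := cost_add hT α Λ Φ₀ hg hd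
  simp only [add_sub_cancel] at hsplit
  rw [hsplit, hstat, sub_self, add_zero]

/-- The unique minimizer of
J(a) = -Φ₀∫₀ᵀ a + (1/(2α))∫₀ᵀ a² + (1/(2Λ))∫₀ᵀ(∫ₜᵀ a)² over a ∈ L²([0,T]) is â·Φ₀ with
âₜ = α·cosh(√ρ(T-t))/cosh(√ρT), ρ = α/Λ, with minimum value -Φ₀²·Λ√ρ·tanh(√ρT)/2. -/
theorem stmt0 (T α Λ Φ₀ : ℝ) (hT : 0 < T) (hα : 0 < α) (hΛ : 0 < Λ) :
    let ρ := α / Λ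
    let J : (ℝ → ℝ) → ℝ := fun a =>
      -Φ₀ * (∫ t in (0:ℝ)..T, a t)
        + (1 / (2 * α)) * (∫ t in (0:ℝ)..T, (a t) ^ 2)
        + (1 / (2 * Λ)) * (∫ t in (0:ℝ)..T, (∫ u in t..T, a u) ^ 2)
    let ahat : ℝ → ℝ := fun t =>
      α * Real.cosh (Real.sqrt ρ * (T - t)) / Real.cosh (Real.sqrt ρ * T)
    (J (fun t => Φ₀ * ahat t) = -Φ₀ ^ 2 * (Λ * Real.sqrt ρ * Real.tanh (Real.sqrt ρ * T) / 2)) ∧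
    ∀ a : ℝ → ℝ,
      MemLp a 2 (volume.restrict (Set.Icc (0:ℝ) T)) →
      (J (fun t => Φ₀ * ahat t) ≤ J a) ∧
      (J a = J (fun t => Φ₀ * ahat t) →
        ∀ᵐ t ∂(volume.restrict (Set.Icc (0:ℝ) T)), a t = Φ₀ * ahat t) := by
  intro ρ J ahat
  have hρ : 0 < ρ := div_pos hα hΛ
  have hr : √ρ ≠ 0 := (sqrt_pos.2 hρ).ne'
  have hrα : Λ * √ρ ^ 2 = α := by rw [sq_sqrt hρ.le]; exact mul_div_cancel₀ α hΛ.ne'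
  refine ⟨cost_optimalControl hT.le hΛ.ne' hr hrα Φ₀, fun a ha => ?_⟩
  have hsplit : J a = J (fun t => Φ₀ * ahat t) + cost T α Λ 0 (fun t => a t - Φ₀ * ahat t) :=
    cost_eq_cost_optimalControl_add hT.le hΛ.ne' hr hrα Φ₀ ha
  refine ⟨?_, fun hmin => ?_⟩
  · linarith [cost_zero_nonneg hT.le hα.le hΛ.le (fun t => a t - Φ₀ * ahat t)]
  · have hg := ((continuous_optimalControl α √ρ T).const_mul Φ₀).memLp_restrict_Icc 2 0 T
    filter_upwards [ae_eq_zero_of_cost_zero_eq_zero hT.le hα hΛ.le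
      (d := fun t => a t - Φ₀ * ahat t) (ha.sub hg) (by linarith)]
      with t ht
    exact sub_eq_zero.1 ht
end

section
/- Among C¹ functions g on [s,T] with g(s) = Θ and g(T) = 0, the minimum of ∫ₛᵀ [g(t)²/(2Λ) + g'(t)²/(2α)] dt is attained at g(t) = Θ·sinh(√ρ(T-t))/sinh(√ρ(T-s)) and equals (Θ²/(2Λ))·coth(√ρ(T-s))/√ρ, where ρ = α/Λ. -/
open Real

/-- Among C¹ functions g on [s,T] with g(s) = Θ, g(T) = 0, the minimum of
∫ₛᵀ [g²/(2Λ) + g'²/(2α)] dt is attained at g*(t) = Θ·sinh(√ρ(T-t))/sinh(√ρ(T-s)) and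
equals (Θ²/(2Λ))·coth(√ρ(T-s))/√ρ, where ρ = α/Λ. -/
theorem stmt3 (α Λ s T Θ : ℝ) (hα : 0 < α) (hΛ : 0 < Λ) (hs : 0 ≤ s) (hsT : s < T) :
    let ρ := α / Λ
    let gstar : ℝ → ℝ := fun t =>
      Θ * Real.sinh (Real.sqrt ρ * (T - t)) / Real.sinh (Real.sqrt ρ * (T - s))
    (∫ t in s..T, (gstar t) ^ 2 / (2 * Λ) + (deriv gstar t) ^ 2 / (2 * α))
        = Θ ^ 2 / (2 * Λ) *
          (Real.cosh (Real.sqrt ρ * (T - s)) / Real.sinh (Real.sqrt ρ * (T - s)))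
          / Real.sqrt ρ ∧
    ∀ g g' : ℝ → ℝ, (∀ t ∈ Set.Icc s T, HasDerivAt g (g' t) t) →
      ContinuousOn g' (Set.Icc s T) → g s = Θ → g T = 0 →
      (∫ t in s..T, (gstar t) ^ 2 / (2 * Λ) + (deriv gstar t) ^ 2 / (2 * α))
        ≤ ∫ t in s..T, (g t) ^ 2 / (2 * Λ) + (g' t) ^ 2 / (2 * α) := by
  intro ρ gstar
  have hρ : 0 < ρ := div_pos hα hΛ
  set c := Real.sqrt ρ with hcdef
  have hcpos : 0 < c := Real.sqrt_pos.mpr hρ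
  have hc2 : c ^ 2 = α / Λ := Real.sq_sqrt hρ.le
  have hcα : c ^ 2 * Λ = α := by
    rw [hc2]; field_simp
  have hTs : 0 < T - s := sub_pos.mpr hsT
  have hSpos : 0 < Real.sinh (c * (T - s)) := Real.sinh_pos_iff.mpr (mul_pos hcpos hTs)
  set S := Real.sinh (c * (T - s)) with hSdef
  set G' : ℝ → ℝ := fun t => -(Θ * c * Real.cosh (c * (T - t)) / S) with hG'def
  have hgstar : ∀ t, gstar t = Θ * Real.sinh (c * (T - t)) / S := fun t => rfl
  have hlin : ∀ t : ℝ, HasDerivAt (fun u : ℝ => c * (T - u)) (-c) t := by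
    intro t
    simpa using ((hasDerivAt_id t).const_sub T).const_mul c
  have hG : ∀ t, HasDerivAt gstar (G' t) t := by
    intro t
    have h2 : HasDerivAt (fun u => Real.sinh (c * (T - u)))
        (Real.cosh (c * (T - t)) * -c) t := (hlin t).sinh
    have h3 := (h2.const_mul Θ).div_const S
    have heq : G' t = Θ * (Real.cosh (c * (T - t)) * -c) / S := by
      simp only [hG'def]; ring
    rw [heq]
    exact h3
  have hderiv : ∀ t, deriv gstar t = G' t := fun t => (hG t).deriv
  -- continuity facts
  have hcontgstar : Continuous gstar := by
    have : Continuous fun t : ℝ => Θ * Real.sinh (c * (T - t)) / S := by fun_prop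
    exact this
  have hcontG' : Continuous G' := by
    have : Continuous fun t : ℝ => -(Θ * c * Real.cosh (c * (T - t)) / S) := by fun_prop
    exact this
  -- rewrite statement integral in terms of G'
  have hIeq : (∫ t in s..T, (gstar t) ^ 2 / (2 * Λ) + (deriv gstar t) ^ 2 / (2 * α))
      = ∫ t in s..T, (gstar t) ^ 2 / (2 * Λ) + (G' t) ^ 2 / (2 * α) := by
    apply intervalIntegral.integral_congr
    intro t _
    simp only [hderiv]
  -- Part 1 : value of the integral
  have hval : (∫ t in s..T, (gstar t) ^ 2 / (2 * Λ) + (G' t) ^ 2 / (2 * α))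
      = Θ ^ 2 / (2 * Λ) * (Real.cosh (c * (T - s)) / S) / c := by
    set F : ℝ → ℝ := fun t => Θ ^ 2 / S ^ 2 / (4 * Λ * c) * (-Real.sinh (2 * c * (T - t)))
      with hFdef
    have hF : ∀ t, HasDerivAt F ((gstar t) ^ 2 / (2 * Λ) + (G' t) ^ 2 / (2 * α)) t := by
      intro t
      have hlin2 : HasDerivAt (fun u : ℝ => 2 * c * (T - u)) (-(2 * c)) t := by
        simpa using ((hasDerivAt_id t).const_sub T).const_mul (2 * c)
      have h2 : HasDerivAt (fun u => Real.sinh (2 * c * (T - u)))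
          (Real.cosh (2 * c * (T - t)) * -(2 * c)) t := hlin2.sinh
      have h3 := (h2.neg).const_mul (Θ ^ 2 / S ^ 2 / (4 * Λ * c))
      have step1 : (gstar t) ^ 2 / (2 * Λ) + (G' t) ^ 2 / (2 * α)
          = Θ ^ 2 / (2 * Λ * S ^ 2)
            * (Real.sinh (c * (T - t)) ^ 2 + Real.cosh (c * (T - t)) ^ 2) := by
        rw [hgstar t]
        simp only [hG'def]
        rw [← hcα]
        field_simp
      have step2 : Θ ^ 2 / S ^ 2 / (4 * Λ * c) * -(Real.cosh (2 * c * (T - t)) * -(2 * c))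
          = Θ ^ 2 / (2 * Λ * S ^ 2)
            * (Real.sinh (c * (T - t)) ^ 2 + Real.cosh (c * (T - t)) ^ 2) := by
        have h2c : (2 : ℝ) * c * (T - t) = 2 * (c * (T - t)) := by ring
        rw [h2c, Real.cosh_two_mul, Real.cosh_sq]
        field_simp
        ring
      have heq : (gstar t) ^ 2 / (2 * Λ) + (G' t) ^ 2 / (2 * α)
          = Θ ^ 2 / S ^ 2 / (4 * Λ * c) * -(Real.cosh (2 * c * (T - t)) * -(2 * c)) :=
        step1.trans step2.symm
      rw [heq]
      exact h3
    have hint : IntervalIntegrable (fun t => (gstar t) ^ 2 / (2 * Λ) + (G' t) ^ 2 / (2 * α))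
        MeasureTheory.volume s T := by
      apply Continuous.intervalIntegrable
      fun_prop
    rw [intervalIntegral.integral_eq_sub_of_hasDerivAt (fun t _ => hF t) hint]
    have hFT : F T = 0 := by simp [hFdef]
    have hFs : F s = Θ ^ 2 / S ^ 2 / (4 * Λ * c) * (-Real.sinh (2 * c * (T - s))) := rfl
    rw [hFT, hFs]
    have h2c : (2 : ℝ) * c * (T - s) = 2 * (c * (T - s)) := by ring
    rw [h2c, Real.sinh_two_mul, ← hSdef]
    field_simp
    ring
  constructor
  · rw [hIeq, hval]
  -- Part 2 : minimality
  intro g g' hg hg' hgs hgT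
  rw [hIeq]
  have huIcc : Set.uIcc s T = Set.Icc s T := Set.uIcc_of_le hsT.le
  have hgcont : ContinuousOn g (Set.Icc s T) :=
    fun t ht => (hg t ht).continuousAt.continuousWithinAt
  -- boundary values of h := g - gstar
  have hgstarT : gstar T = 0 := by rw [hgstar]; simp
  have hgstars : gstar s = Θ := by
    rw [hgstar, ← hSdef]
    field_simp
  -- decomposition
  set base : ℝ → ℝ := fun t => (gstar t) ^ 2 / (2 * Λ) + (G' t) ^ 2 / (2 * α) with hbase
  set quad : ℝ → ℝ := fun t =>
    (g t - gstar t) ^ 2 / (2 * Λ) + (g' t - G' t) ^ 2 / (2 * α) with hquad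
  set cross : ℝ → ℝ := fun t =>
    gstar t * (g t - gstar t) / Λ + G' t * (g' t - G' t) / α with hcross
  have hsplit : ∀ t, (g t) ^ 2 / (2 * Λ) + (g' t) ^ 2 / (2 * α)
      = base t + quad t + cross t := by
    intro t
    simp only [hbase, hquad, hcross]
    field_simp
    ring
  -- integrability
  have hbaseint : IntervalIntegrable base MeasureTheory.volume s T := by
    apply Continuous.intervalIntegrable
    simp only [hbase]
    fun_prop
  have hquadint : IntervalIntegrable quad MeasureTheory.volume s T := by
    apply ContinuousOn.intervalIntegrable
    rw [huIcc]
    simp only [hquad]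
    apply ContinuousOn.add
    · exact ((hgcont.sub hcontgstar.continuousOn).pow 2).div_const _
    · exact ((hg'.sub hcontG'.continuousOn).pow 2).div_const _
  have hcrossint : IntervalIntegrable cross MeasureTheory.volume s T := by
    apply ContinuousOn.intervalIntegrable
    rw [huIcc]
    simp only [hcross]
    apply ContinuousOn.add
    · exact ((hcontgstar.continuousOn.mul (hgcont.sub hcontgstar.continuousOn)).div_const _)
    · exact ((hcontG'.continuousOn.mul (hg'.sub hcontG'.continuousOn)).div_const _)
  -- the cross term integrates to zero
  have hcrosszero : (∫ t in s..T, cross t) = 0 := by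
    set P : ℝ → ℝ := fun t => G' t * (g t - gstar t) / α with hPdef
    have hP : ∀ t ∈ Set.uIcc s T, HasDerivAt P (cross t) t := by
      intro t ht
      rw [huIcc] at ht
      -- derivative of G'
      have hG'' : HasDerivAt G' (c ^ 2 * gstar t) t := by
        have h2 : HasDerivAt (fun u => Real.cosh (c * (T - u)))
            (Real.sinh (c * (T - t)) * -c) t := (hlin t).cosh
        have h3 := ((h2.const_mul (Θ * c)).div_const S).neg
        have heq : c ^ 2 * gstar t = -(Θ * c * (Real.sinh (c * (T - t)) * -c) / S) := by
          rw [hgstar t]; ring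
        rw [heq]
        exact h3
      have hh : HasDerivAt (fun u => g u - gstar u) (g' t - G' t) t :=
        (hg t ht).sub (hG t)
      have h4 := (hG''.mul hh).div_const α
      have heq : cross t = (c ^ 2 * gstar t * (g t - gstar t)
          + G' t * (g' t - G' t)) / α := by
        simp only [hcross]
        rw [← hcα]
        field_simp
      rw [heq]
      exact h4
    have hcrossint' : IntervalIntegrable cross MeasureTheory.volume s T := hcrossint
    rw [intervalIntegral.integral_eq_sub_of_hasDerivAt hP hcrossint']
    have h1 : P T = 0 := by simp [hPdef, hgT, hgstarT]
    have h2 : P s = 0 := by simp [hPdef, hgs, hgstars]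
    rw [h1, h2, sub_zero]
  -- the quadratic term is nonnegative
  have hquadnn : 0 ≤ ∫ t in s..T, quad t := by
    apply intervalIntegral.integral_nonneg hsT.le
    intro t _
    simp only [hquad]
    positivity
  -- put it together
  have hsum : (∫ t in s..T, (g t) ^ 2 / (2 * Λ) + (g' t) ^ 2 / (2 * α))
      = (∫ t in s..T, base t) + (∫ t in s..T, quad t) + (∫ t in s..T, cross t) := by
    rw [← intervalIntegral.integral_add hbaseint hquadint,
        ← intervalIntegral.integral_add (hbaseint.add hquadint) hcrossint]
    apply intervalIntegral.integral_congr
    intro t _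
    exact hsplit t
  rw [hsum, hcrosszero, add_zero]
  simp only [hbase]
  linarith
end

section
/- For the explicit kernel l̂_{t,s} = ρ(s∧Δ)cosh(√ρ(T-t)) / (cosh(√ρ(T-s)) + √ρ(s∧Δ)sinh(√ρ(T-s))), the function k̂_{t,s} = -exp(∫ₛᵗ l̂_{u,u} du)·l̂_{t,s} satisfies the resolvent identity k̂_{t,s} + l̂_{t,s} = ∫ₛᵗ l̂_{t,u} k̂_{u,s} du for all 0 ≤ s ≤ t ≤ T. -/
open Real MeasureTheory

/-- For the explicit kernel l̂_{t,s} = ρ(s∧Δ)cosh(√ρ(T-t))/(cosh(√ρ(T-s)) + √ρ(s∧Δ)sinh(√ρ(T-s))),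
the function k̂_{t,s} = -exp(∫ₛᵗ l̂_{u,u} du)·l̂_{t,s} satisfies the resolvent identity
k̂_{t,s} + l̂_{t,s} = ∫ₛᵗ l̂_{t,u}k̂_{u,s} du for all 0 ≤ s ≤ t ≤ T. -/
theorem stmt7 (T ρ Δ : ℝ) (hT : 0 < T) (hρ : 0 < ρ) (hΔ : 0 < Δ) :
    let lhat : ℝ → ℝ → ℝ := fun t s =>
      ρ * (min s Δ) * Real.cosh (Real.sqrt ρ * (T - t)) /
        (Real.cosh (Real.sqrt ρ * (T - s))
          + Real.sqrt ρ * (min s Δ) * Real.sinh (Real.sqrt ρ * (T - s)))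
    let khat : ℝ → ℝ → ℝ := fun t s => -Real.exp (∫ u in s..t, lhat u u) * lhat t s
    ∀ s t : ℝ, 0 ≤ s → s ≤ t → t ≤ T →
      khat t s + lhat t s = ∫ u in s..t, lhat t u * khat u s := by
  intro lhat khat s t hs hst htT
  set f : ℝ → ℝ := fun u => lhat u u with hf
  have huIcc : Set.uIcc s t = Set.Icc s t := Set.uIcc_of_le hst
  -- denominator positivity on [s,t]
  have hD : ∀ u ∈ Set.uIcc s t, 0 < Real.cosh (Real.sqrt ρ * (T - u))
      + Real.sqrt ρ * (min u Δ) * Real.sinh (Real.sqrt ρ * (T - u)) := by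
    intro u hu
    rw [huIcc] at hu
    have h1 : (1 : ℝ) ≤ Real.cosh (Real.sqrt ρ * (T - u)) := Real.one_le_cosh _
    have h2 : 0 ≤ Real.sqrt ρ * (min u Δ) * Real.sinh (Real.sqrt ρ * (T - u)) := by
      apply mul_nonneg
      · exact mul_nonneg (Real.sqrt_nonneg _) (le_min (hs.trans hu.1) hΔ.le)
      · exact Real.sinh_nonneg_iff.mpr (mul_nonneg (Real.sqrt_nonneg _) (by linarith [hu.2]))
    linarith
  have hcont : ∀ u ∈ Set.uIcc s t, ContinuousAt f u := by
    intro u hu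
    have hnum : ContinuousAt (fun u : ℝ => ρ * (min u Δ) * Real.cosh (Real.sqrt ρ * (T - u))) u := by
      fun_prop
    have hden : ContinuousAt (fun u : ℝ => Real.cosh (Real.sqrt ρ * (T - u))
        + Real.sqrt ρ * (min u Δ) * Real.sinh (Real.sqrt ρ * (T - u))) u := by
      fun_prop
    exact hnum.div hden (ne_of_gt (hD u hu))
  have hmeasf : Measurable f := by
    apply Measurable.div
    · fun_prop
    · fun_prop
  have hintf : IntervalIntegrable f volume s t :=
    ContinuousOn.intervalIntegrable (fun u hu => (hcont u hu).continuousWithinAt)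
  set g : ℝ → ℝ := fun u => ∫ x in s..u, f x with hg
  have hgderiv : ∀ u ∈ Set.uIcc s t, HasDerivAt g (f u) u := by
    intro u hu
    apply intervalIntegral.integral_hasDerivAt_right
    · apply hintf.mono_set
      rw [huIcc] at hu
      rw [Set.uIcc_of_le hu.1, huIcc]
      exact Set.Icc_subset_Icc le_rfl hu.2
    · exact hmeasf.stronglyMeasurable.stronglyMeasurableAtFilter
    · exact hcont u hu
  have hGderiv : ∀ u ∈ Set.uIcc s t,
      HasDerivAt (fun x => Real.exp (g x)) (Real.exp (g u) * f u) u :=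
    fun u hu => (hgderiv u hu).exp
  have hgcont : ContinuousOn g (Set.uIcc s t) :=
    fun u hu => (hgderiv u hu).continuousAt.continuousWithinAt
  have hintG : IntervalIntegrable (fun u => Real.exp (g u) * f u) volume s t := by
    apply ContinuousOn.intervalIntegrable
    exact (Real.continuous_exp.comp_continuousOn hgcont).mul
      (fun u hu => (hcont u hu).continuousWithinAt)
  have key : ∫ u in s..t, Real.exp (g u) * f u = Real.exp (g t) - 1 := by
    rw [intervalIntegral.integral_eq_sub_of_hasDerivAt hGderiv hintG]
    have : g s = 0 := by simp [hg]
    rw [this, Real.exp_zero]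
  have hrw : ∀ u, lhat t u * khat u s = -(Real.exp (g u) * f u) * lhat t s := by
    intro u
    simp only [khat, lhat, hf, hg]
    ring
  have hkts : khat t s = -Real.exp (g t) * lhat t s := by
    simp only [khat, hf, hg]
  rw [intervalIntegral.integral_congr (g := fun u => -(Real.exp (g u) * f u) * lhat t s)
    (fun u _ => hrw u)]
  rw [intervalIntegral.integral_mul_const, intervalIntegral.integral_neg, key, hkts]
  ring
end

section
/- For a random variable X and a sigma-algebra ℋ, the map ξ ↦ E[ E[ξX|ℋ]² / E[ξ|ℋ] ] is convex on the set of a.s.-strictly-positive densities ξ (E[ξ]=1) for which the expressions are finite. Equivalently, for densities ξ₁, ξ₂ and s ∈ [0,1], writing R(ξ) for the measure with dR(ξ)/dP = ξ: E_{R(ξₛ)}[ (E_{R(ξₛ)}[X|ℋ])² ] ≤ s·E_{R(ξ₁)}[(E_{R(ξ₁)}[X|ℋ])²] + (1-s)·E_{R(ξ₂)}[(E_{R(ξ₂)}[X|ℋ])²], where ξₛ = sξ₁+(1-s)ξ₂. -/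
/-!
Conditioning on `m`, `E[ξ h] = E[E[ξ|m] h]` for `m`-measurable `h ≥ 0`, so each side of the
inequality is the expectation of the perspective `b (a / b)² = a² / b` of `x ↦ x²`, evaluated at
`a = E[ξX|m]`, `b = E[ξ|m]`. Both arguments are linear in `ξ`, and the perspective is jointly
convex on `b > 0`, so the inequality already holds pointwise before integrating.
-/

open MeasureTheory

lemma weighted_mul_div_sq_le {a₁ a₂ b₁ b₂ s t : ℝ} (hb₁ : 0 < b₁) (hb₂ : 0 < b₂)
    (hs : 0 ≤ s) (ht : 0 ≤ t) :
    (s * b₁ + t * b₂) * ((s * a₁ + t * a₂) / (s * b₁ + t * b₂)) ^ 2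
      ≤ s * (b₁ * (a₁ / b₁) ^ 2) + t * (b₂ * (a₂ / b₂) ^ 2) := by
  -- With `a = b x`, the gap is `s t b₁ b₂ (x - y)²` times the common denominator.
  obtain ⟨x, rfl⟩ : ∃ x, a₁ = b₁ * x := ⟨a₁ / b₁, by field_simp⟩
  obtain ⟨y, rfl⟩ : ∃ y, a₂ = b₂ * y := ⟨a₂ / b₂, by field_simp⟩
  rw [mul_div_cancel_left₀ x hb₁.ne', mul_div_cancel_left₀ y hb₂.ne']
  rcases (add_nonneg (mul_nonneg hs hb₁.le) (mul_nonneg ht hb₂.le)).eq_or_lt with hc | hc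
  · rw [← hc, zero_mul]; positivity
  rw [div_pow, mul_div_assoc', div_le_iff₀ (pow_pos hc 2)]
  have := mul_nonneg (mul_nonneg hs ht) (mul_nonneg hb₁.le hb₂.le)
  nlinarith [mul_nonneg hc.le (mul_nonneg this (sq_nonneg (x - y)))]

section CondExp

variable {Ω : Type*} {m m₀ : MeasurableSpace Ω} {μ : Measure[m₀] Ω}

lemma condExp_const_mul_add_const_mul {f g : Ω → ℝ} (hf : Integrable f μ) (hg : Integrable g μ)
    (a b : ℝ) :
    μ[fun ω => a * f ω + b * g ω|m] =ᵐ[μ] fun ω => a * μ[f|m] ω + b * μ[g|m] ω := by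
  change μ[a • f + b • g|m] =ᵐ[μ] a • μ[f|m] + b • μ[g|m]
  filter_upwards [condExp_add (hf.smul a) (hg.smul b) m,
    condExp_smul (m := m) (μ := μ) a f, condExp_smul (m := m) (μ := μ) b g] with ω h1 h2 h3
  rw [h1, Pi.add_apply, h2, h3, Pi.add_apply]

lemma ae_condExp_pos (hm : m ≤ m₀) [SigmaFinite (μ.trim hm)] {ξ : Ω → ℝ}
    (hξ : Integrable ξ μ) (hpos : ∀ᵐ ω ∂μ, 0 < ξ ω) : ∀ᵐ ω ∂μ, 0 < μ[ξ|m] ω := by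
  set N := {ω | μ[ξ|m] ω ≤ 0}
  have hN : MeasurableSet[m] N :=
    (stronglyMeasurable_condExp (m := m) (μ := μ) (f := ξ)).measurable measurableSet_Iic
  have hξ_nonneg : 0 ≤ᵐ[μ.restrict N] ξ := ae_restrict_of_ae (hpos.mono fun ω h => h.le)
  have hξN : ∫ ω in N, ξ ω ∂μ = 0 := by
    refine le_antisymm ?_ (setIntegral_nonneg_of_ae_restrict hξ_nonneg)
    rw [← setIntegral_condExp hm hξ hN]
    exact setIntegral_nonpos (hm _ hN) fun ω hω => hω
  have hξ_zero := (integral_eq_zero_iff_of_nonneg_ae hξ_nonneg hξ.integrableOn).mp hξN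
  have hN_null : ∀ᵐ ω ∂μ.restrict N, False := by
    filter_upwards [ae_restrict_of_ae hpos, hξ_zero] with ω h0 h1
    exact h0.ne' h1
  filter_upwards [(ae_restrict_iff' (hm _ hN)).mp hN_null] with ω hω
  exact not_le.mp hω

lemma integral_mul_eq_integral_condExp_mul (hm : m ≤ m₀) [SigmaFinite (μ.trim hm)]
    {ξ h : Ω → ℝ} (hξ : Integrable ξ μ) (hh : StronglyMeasurable[m] h)
    (hξh : Integrable (fun ω => ξ ω * h ω) μ) :
    ∫ ω, ξ ω * h ω ∂μ = ∫ ω, μ[ξ|m] ω * h ω ∂μ := by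
  rw [← integral_condExp hm]
  exact integral_congr_ae (condExp_mul_of_stronglyMeasurable_right hh hξh hξ)

lemma integrable_condExp_mul {ξ h : Ω → ℝ} (hξ : Integrable ξ μ) (hh : StronglyMeasurable[m] h)
    (hξh : Integrable (fun ω => ξ ω * h ω) μ) :
    Integrable (fun ω => μ[ξ|m] ω * h ω) μ :=
  integrable_condExp.congr (condExp_mul_of_stronglyMeasurable_right hh hξh hξ)

lemma integral_mul_le_of_condExp_mul_le (hm : m ≤ m₀) [SigmaFinite (μ.trim hm)]
    {ξ h g : Ω → ℝ} (hξ : Integrable ξ μ) (hξ_nonneg : 0 ≤ᵐ[μ] ξ) (hh : StronglyMeasurable[m] h)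
    (hh_nonneg : 0 ≤ h) (hg : Integrable g μ) (hle : ∀ᵐ ω ∂μ, μ[ξ|m] ω * h ω ≤ g ω) :
    ∫ ω, ξ ω * h ω ∂μ ≤ ∫ ω, g ω ∂μ := by
  -- Otherwise `∫ ξ h` is the junk value `0`, below `∫ g` since `g ≥ E[ξ|m] h ≥ 0`.
  by_cases hξh : Integrable (fun ω => ξ ω * h ω) μ
  · rw [integral_mul_eq_integral_condExp_mul hm hξ hh hξh]
    exact integral_mono_ae (integrable_condExp_mul hξ hh hξh) hg hle
  · rw [integral_undef hξh]
    refine integral_nonneg_of_ae ?_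
    filter_upwards [condExp_nonneg hξ_nonneg, hle] with ω hξω hω
    exact (mul_nonneg hξω (hh_nonneg ω)).trans hω

lemma stronglyMeasurable_condExp_div_condExp_sq (f g : Ω → ℝ) :
    StronglyMeasurable[m] fun ω => (μ[f|m] ω / μ[g|m] ω) ^ 2 :=
  ((stronglyMeasurable_condExp.measurable.div stronglyMeasurable_condExp.measurable).pow_const
    2).stronglyMeasurable

end CondExp

theorem stmt9_general {Ω : Type*} {F : MeasurableSpace Ω} (μ : Measure Ω) [IsProbabilityMeasure μ]
    (m : MeasurableSpace Ω) (hm : m ≤ F)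
    (ξ₁ ξ₂ X : Ω → ℝ)
    (hξ₁ : Integrable ξ₁ μ) (hξ₂ : Integrable ξ₂ μ)
    (hpos₁ : ∀ᵐ ω ∂μ, 0 < ξ₁ ω) (hpos₂ : ∀ᵐ ω ∂μ, 0 < ξ₂ ω)
    (hξ₁X : Integrable (fun ω => ξ₁ ω * X ω) μ) (hξ₂X : Integrable (fun ω => ξ₂ ω * X ω) μ)
    (hfin₁ : Integrable
      (fun ω => ξ₁ ω * (((μ[(fun ω => ξ₁ ω * X ω)|m]) ω) / ((μ[ξ₁|m]) ω)) ^ 2) μ)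
    (hfin₂ : Integrable
      (fun ω => ξ₂ ω * (((μ[(fun ω => ξ₂ ω * X ω)|m]) ω) / ((μ[ξ₂|m]) ω)) ^ 2) μ)
    (s : ℝ) (hs : s ∈ Set.Icc (0:ℝ) 1) :
    (∫ ω, (s * ξ₁ ω + (1 - s) * ξ₂ ω) *
        (((μ[(fun ω => (s * ξ₁ ω + (1 - s) * ξ₂ ω) * X ω)|m]) ω)
          / ((μ[(fun ω => s * ξ₁ ω + (1 - s) * ξ₂ ω)|m]) ω)) ^ 2 ∂μ)
      ≤ s * ∫ ω, ξ₁ ω * (((μ[(fun ω => ξ₁ ω * X ω)|m]) ω) / ((μ[ξ₁|m]) ω)) ^ 2 ∂μ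
        + (1 - s) * ∫ ω, ξ₂ ω * (((μ[(fun ω => ξ₂ ω * X ω)|m]) ω) / ((μ[ξ₂|m]) ω)) ^ 2 ∂μ := by
  obtain ⟨hs₀, hs₁⟩ := hs
  have hξX : (fun ω => (s * ξ₁ ω + (1 - s) * ξ₂ ω) * X ω)
      = fun ω => s * (ξ₁ ω * X ω) + (1 - s) * (ξ₂ ω * X ω) := by
    funext ω; ring
  have hmeas := stronglyMeasurable_condExp_div_condExp_sq (m := m) (μ := μ)
  have I₁ := (integrable_condExp_mul hξ₁ (hmeas _ _) hfin₁).const_mul s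
  have I₂ := (integrable_condExp_mul hξ₂ (hmeas _ _) hfin₂).const_mul (1 - s)
  rw [hξX, integral_mul_eq_integral_condExp_mul hm hξ₁ (hmeas _ _) hfin₁,
    integral_mul_eq_integral_condExp_mul hm hξ₂ (hmeas _ _) hfin₂,
    ← integral_const_mul, ← integral_const_mul, ← integral_add I₁ I₂]
  refine integral_mul_le_of_condExp_mul_le hm ((hξ₁.const_mul s).add (hξ₂.const_mul (1 - s)))
    ?_ (hmeas _ _) (fun ω => sq_nonneg _) (I₁.add I₂) ?_
  · filter_upwards [hpos₁, hpos₂] with ω h₁ h₂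
    positivity
  · filter_upwards [ae_condExp_pos hm hξ₁ hpos₁, ae_condExp_pos hm hξ₂ hpos₂,
      condExp_const_mul_add_const_mul (m := m) hξ₁ hξ₂ s (1 - s),
      condExp_const_mul_add_const_mul (m := m) hξ₁X hξ₂X s (1 - s)] with ω hB₁ hB₂ hB hA
    rw [hA, hB]
    exact weighted_mul_div_sq_le hB₁ hB₂ hs₀ (sub_nonneg.2 hs₁)

/-- Convexity of ξ ↦ E[E[ξX|ℋ]²/E[ξ|ℋ]] on strictly positive densities: writing
E_{R(ξ)}[X|ℋ] = E[ξX|ℋ]/E[ξ|ℋ] for the conditional expectation under dR(ξ) = ξ dP, for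
densities ξ₁, ξ₂, s ∈ [0,1] and ξₛ = sξ₁+(1-s)ξ₂,
E_{R(ξₛ)}[(E_{R(ξₛ)}[X|ℋ])²] ≤ s·E_{R(ξ₁)}[(E_{R(ξ₁)}[X|ℋ])²] + (1-s)·E_{R(ξ₂)}[(E_{R(ξ₂)}[X|ℋ])²]. -/
theorem stmt9 {Ω : Type*} {F : MeasurableSpace Ω} (μ : Measure Ω) [IsProbabilityMeasure μ]
    (m : MeasurableSpace Ω) (hm : m ≤ F)
    (ξ₁ ξ₂ X : Ω → ℝ)
    (hξ₁ : Integrable ξ₁ μ) (hξ₂ : Integrable ξ₂ μ)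
    (hone₁ : ∫ ω, ξ₁ ω ∂μ = 1) (hone₂ : ∫ ω, ξ₂ ω ∂μ = 1)
    (hpos₁ : ∀ᵐ ω ∂μ, 0 < ξ₁ ω) (hpos₂ : ∀ᵐ ω ∂μ, 0 < ξ₂ ω)
    (hξ₁X : Integrable (fun ω => ξ₁ ω * X ω) μ) (hξ₂X : Integrable (fun ω => ξ₂ ω * X ω) μ)
    (hfin₁ : Integrable
      (fun ω => ξ₁ ω * (((μ[(fun ω => ξ₁ ω * X ω)|m]) ω) / ((μ[ξ₁|m]) ω)) ^ 2) μ)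
    (hfin₂ : Integrable
      (fun ω => ξ₂ ω * (((μ[(fun ω => ξ₂ ω * X ω)|m]) ω) / ((μ[ξ₂|m]) ω)) ^ 2) μ)
    (s : ℝ) (hs : s ∈ Set.Icc (0:ℝ) 1) :
    (∫ ω, (s * ξ₁ ω + (1 - s) * ξ₂ ω) *
        (((μ[(fun ω => (s * ξ₁ ω + (1 - s) * ξ₂ ω) * X ω)|m]) ω)
          / ((μ[(fun ω => s * ξ₁ ω + (1 - s) * ξ₂ ω)|m]) ω)) ^ 2 ∂μ)
      ≤ s * ∫ ω, ξ₁ ω * (((μ[(fun ω => ξ₁ ω * X ω)|m]) ω) / ((μ[ξ₁|m]) ω)) ^ 2 ∂μ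
        + (1 - s) * ∫ ω, ξ₂ ω * (((μ[(fun ω => ξ₂ ω * X ω)|m]) ω) / ((μ[ξ₂|m]) ω)) ^ 2 ∂μ :=
  stmt9_general μ m hm ξ₁ ξ₂ X hξ₁ hξ₂ hpos₁ hpos₂ hξ₁X hξ₂X hfin₁ hfin₂ s hs
end

section
/- Let ξₙ be nonnegative random variables with E[ξₙ] = 1 and sup_n E[ξₙ ln⁺ ξₙ] ≤ C < ∞, and let S be a random variable with E[exp(a S²)] < ∞ for some a > 0. Then sup_n E[ξₙ · 1_{ξₙ|S| ≥ b}] → 0 as b → ∞; in particular the family (ξₙ S)ₙ is uniformly integrable provided additionally sup_n E[ξₙ S²] < ∞. -/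
open MeasureTheory Real Filter Topology
open scoped NNReal ENNReal

/-! On `{ξ |S| ≥ b}` we have `log b ≤ log ξ + log |S|`, and Young's inequality
`x y ≤ x log⁺ x + exp y` with `y = 2 log |S|` gives `ξ log |S| ≤ (ξ log⁺ ξ + S²) / 2`. Hence
`log b · E[ξ; ξ |S| ≥ b] ≤ (3/2) E[ξ log⁺ ξ] + (1/2) E[S²]` uniformly in `n`, and `E[S²]` is finite
by the exponential moment. For uniform integrability, `ξ |S| ≤ R ξ + ξ S² / R`: on the tail set the
first term is small by the estimate above, and the second is at most `K / R`. -/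

namespace Real

theorem mul_le_mul_max_log_add_exp {x : ℝ} (hx : 0 ≤ x) (y : ℝ) :
    x * y ≤ x * max (log x) 0 + exp y := by
  rcases hx.eq_or_lt with rfl | hx
  · simpa using (exp_pos y).le
  have hlog : x * (y - log x) ≤ exp y - x := by
    calc x * (y - log x) = x * log (exp y / x) := by
          rw [log_div (exp_ne_zero y) hx.ne', log_exp]
      _ ≤ x * (exp y / x - 1) :=
          mul_le_mul_of_nonneg_left (log_le_sub_one_of_pos (by positivity)) hx.le
      _ = exp y - x := by field_simp
  nlinarith [mul_le_mul_of_nonneg_left (le_max_left (log x) 0) hx.le]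

theorem log_mul_le_of_le_mul_abs {x s b : ℝ} (hx : 0 ≤ x) (hb : 1 < b) (h : b ≤ x * |s|) :
    log b * x ≤ 3 / 2 * (x * max (log x) 0) + 1 / 2 * s ^ 2 := by
  have hxs : 0 < x * |s| := by linarith
  have hx' : 0 < x := pos_of_mul_pos_left hxs (abs_nonneg s)
  have hs : 0 < |s| := pos_of_mul_pos_right hxs hx
  have hlogb : log b ≤ log x + log |s| := by
    rw [← log_mul hx'.ne' hs.ne']
    exact log_le_log (by linarith) h
  have hyoung := mul_le_mul_max_log_add_exp hx (2 * log |s|)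
  have hexp : exp (2 * log |s|) = s ^ 2 := by
    rw [mul_comm, exp_mul, exp_log hs, rpow_two, sq_abs]
  rw [hexp] at hyoung
  nlinarith [mul_le_mul_of_nonneg_left hlogb hx,
    mul_le_mul_of_nonneg_left (le_max_left (log x) 0) hx]

theorem mul_abs_le_mul_add_mul_sq_div {x R : ℝ} (hx : 0 ≤ x) (hR : 0 < R) (s : ℝ) :
    x * |s| ≤ R * x + x * s ^ 2 / R := by
  have h : R * |s| ≤ R ^ 2 + s ^ 2 := by nlinarith [sq_nonneg (|s| - R), sq_abs s]
  have h' : |s| ≤ R + s ^ 2 / R := by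
    rw [← sub_le_iff_le_add', ← mul_le_mul_iff_of_pos_left hR]
    field_simp
    nlinarith
  nlinarith [mul_le_mul_of_nonneg_left h' hx, mul_div_assoc x (s ^ 2) R]

end Real

section

variable {Ω : Type*} {m : MeasurableSpace Ω} {μ : Measure Ω}

theorem log_mul_setIntegral_le {ξ S : Ω → ℝ} (hξ : Measurable ξ) (hS : Measurable S)
    (hnn : 0 ≤ᵐ[μ] ξ) (hint : Integrable ξ μ)
    (hent : Integrable (fun ω => ξ ω * max (log (ξ ω)) 0) μ)
    (hS2 : Integrable (fun ω => S ω ^ 2) μ) {b : ℝ} (hb : 1 < b) :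
    log b * ∫ ω in {ω | b ≤ ξ ω * |S ω|}, ξ ω ∂μ ≤
      3 / 2 * ∫ ω, ξ ω * max (log (ξ ω)) 0 ∂μ + 1 / 2 * ∫ ω, S ω ^ 2 ∂μ := by
  have hA : MeasurableSet {ω | b ≤ ξ ω * |S ω|} :=
    measurableSet_le measurable_const (hξ.mul hS.abs)
  set g := fun ω => 3 / 2 * (ξ ω * max (log (ξ ω)) 0) + 1 / 2 * S ω ^ 2
  have hg : Integrable g μ := (hent.const_mul _).add (hS2.const_mul _)
  have hg_nonneg : 0 ≤ᵐ[μ] g := by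
    filter_upwards [hnn] with ω (hω : 0 ≤ ξ ω)
    have := mul_nonneg hω (le_max_right (log (ξ ω)) 0)
    positivity
  calc log b * ∫ ω in {ω | b ≤ ξ ω * |S ω|}, ξ ω ∂μ
      = ∫ ω in {ω | b ≤ ξ ω * |S ω|}, log b * ξ ω ∂μ := (integral_const_mul _ _).symm
    _ ≤ ∫ ω in {ω | b ≤ ξ ω * |S ω|}, g ω ∂μ := by
        refine setIntegral_mono_on_ae (hint.const_mul _).integrableOn hg.integrableOn hA ?_
        filter_upwards [hnn] with ω hω hωA
        exact log_mul_le_of_le_mul_abs hω hb hωA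
    _ ≤ ∫ ω, g ω ∂μ := setIntegral_le_integral hg hg_nonneg
    _ = 3 / 2 * ∫ ω, ξ ω * max (log (ξ ω)) 0 ∂μ + 1 / 2 * ∫ ω, S ω ^ 2 ∂μ := by
        rw [integral_add (hent.const_mul _) (hS2.const_mul _), integral_const_mul,
          integral_const_mul]

theorem integrable_sq_of_integrable_exp_mul_sq {S : Ω → ℝ} (hS : AEStronglyMeasurable S μ)
    {a : ℝ} (ha : 0 < a) (h : Integrable (fun ω => exp (a * S ω ^ 2)) μ) :
    Integrable (fun ω => S ω ^ 2) μ := by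
  refine (h.div_const a).mono' (hS.pow 2) (ae_of_all _ fun ω => ?_)
  rw [Real.norm_of_nonneg (sq_nonneg _), le_div_iff₀ ha]
  linarith [add_one_le_exp (a * S ω ^ 2)]

theorem tendsto_iSup_nhds_zero_of_le {ι α : Type*} [Nonempty ι] {l : Filter α}
    {f : ι → α → ℝ} {g : α → ℝ} (hf : ∀ᶠ b in l, ∀ i, 0 ≤ f i b ∧ f i b ≤ g b)
    (hg : Tendsto g l (𝓝 0)) : Tendsto (fun b => ⨆ i, f i b) l (𝓝 0) := by
  refine tendsto_of_tendsto_of_tendsto_of_le_of_le' tendsto_const_nhds hg ?_ ?_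
  · filter_upwards [hf] with b hb
    obtain ⟨i⟩ := ‹Nonempty ι›
    exact (hb i).1.trans (le_ciSup ⟨g b, by rintro _ ⟨j, rfl⟩; exact (hb j).2⟩ i)
  · filter_upwards [hf] with b hb
    exact ciSup_le fun i => (hb i).2

theorem eLpNorm_one_indicator_mul_le {ξ S : Ω → ℝ} (hξ : Measurable ξ) (hS : Measurable S)
    (hnn : 0 ≤ᵐ[μ] ξ) (hint : Integrable ξ μ) (hξS : Integrable (fun ω => ξ ω * S ω ^ 2) μ)
    (c : ℝ≥0) {R : ℝ} (hR : 0 < R) :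
    eLpNorm ({x | c ≤ ‖ξ x * S x‖₊}.indicator (fun ω => ξ ω * S ω)) 1 μ ≤
      ENNReal.ofReal (R * ∫ ω in {ω | c ≤ ξ ω * |S ω|}, ξ ω ∂μ +
        (∫ ω, ξ ω * S ω ^ 2 ∂μ) / R) := by
  set A := {ω | (c : ℝ) ≤ ξ ω * |S ω|}
  have hA : MeasurableSet A := measurableSet_le measurable_const (hξ.mul hS.abs)
  set g := fun ω => R * A.indicator ξ ω + ξ ω * S ω ^ 2 / R
  have hg : Integrable g μ := ((hint.indicator hA).const_mul R).add (hξS.div_const R)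
  have hg_nonneg : ∀ ω, 0 ≤ ξ ω → 0 ≤ g ω := fun ω hω => by
    have := Set.indicator_apply_nonneg (s := A) (f := ξ) (a := ω) fun _ => hω
    positivity
  have hbound : ∀ᵐ ω ∂μ,
      ‖{x | c ≤ ‖ξ x * S x‖₊}.indicator (fun ω => ξ ω * S ω) ω‖ₑ ≤ ENNReal.ofReal (g ω) := by
    filter_upwards [hnn] with ω (hω : 0 ≤ ξ ω)
    rw [← ofReal_norm]
    refine ENNReal.ofReal_le_ofReal ?_
    by_cases hω' : ω ∈ {x | c ≤ ‖ξ x * S x‖₊}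
    · have hωA : ω ∈ A := by
        rwa [Set.mem_ofPred_eq, ← NNReal.coe_le_coe, coe_nnnorm, norm_mul,
          Real.norm_of_nonneg hω, Real.norm_eq_abs] at hω'
      rw [Set.indicator_of_mem hω', norm_mul, Real.norm_of_nonneg hω, Real.norm_eq_abs]
      simp only [g, Set.indicator_of_mem hωA]
      exact mul_abs_le_mul_add_mul_sq_div hω hR (S ω)
    · rw [Set.indicator_of_notMem hω', norm_zero]
      exact hg_nonneg ω hω
  calc eLpNorm ({x | c ≤ ‖ξ x * S x‖₊}.indicator (fun ω => ξ ω * S ω)) 1 μ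
      = ∫⁻ ω, ‖{x | c ≤ ‖ξ x * S x‖₊}.indicator (fun ω => ξ ω * S ω) ω‖ₑ ∂μ :=
        eLpNorm_one_eq_lintegral_enorm
    _ ≤ ∫⁻ ω, ENNReal.ofReal (g ω) ∂μ := lintegral_mono_ae hbound
    _ = ENNReal.ofReal (∫ ω, g ω ∂μ) :=
        (ofReal_integral_eq_lintegral_ofReal hg (hnn.mono hg_nonneg)).symm
    _ = _ := by
        rw [integral_add ((hint.indicator hA).const_mul R) (hξS.div_const R),
          integral_const_mul, integral_indicator hA, integral_div]

theorem uniformIntegrable_mul_of_forall_setIntegral_le [IsFiniteMeasure μ] {ι : Type*}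
    {ξ : ι → Ω → ℝ} {S : Ω → ℝ} (hξ : ∀ i, Measurable (ξ i)) (hS : Measurable S)
    (hnn : ∀ i, 0 ≤ᵐ[μ] ξ i) (hint : ∀ i, Integrable (ξ i) μ) {K : ℝ}
    (hK : ∀ i, Integrable (fun ω => ξ i ω * S ω ^ 2) μ ∧ ∫ ω, ξ i ω * S ω ^ 2 ∂μ ≤ K)
    (htail : ∀ δ > 0, ∃ c : ℝ≥0, ∀ i, ∫ ω in {ω | c ≤ ξ i ω * |S ω|}, ξ i ω ∂μ ≤ δ) :
    UniformIntegrable (fun i ω => ξ i ω * S ω) 1 μ := by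
  refine uniformIntegrable_of le_rfl ENNReal.one_ne_top
    (fun i => ((hξ i).mul hS).aestronglyMeasurable) fun ε hε => ?_
  set R := 2 * (|K| + 1) / ε
  have hR : 0 < R := by positivity
  have hKR : |K| / R ≤ ε / 2 := by
    rw [div_le_iff₀ hR]
    simp only [R]
    field_simp
    linarith
  obtain ⟨c, hc⟩ := htail (ε / 2 / R) (by positivity)
  refine ⟨c, fun i => (eLpNorm_one_indicator_mul_le (hξ i) hS (hnn i) (hint i) (hK i).1 c hR).trans
    (ENNReal.ofReal_le_ofReal ?_)⟩
  calc R * ∫ ω in {ω | c ≤ ξ i ω * |S ω|}, ξ i ω ∂μ + (∫ ω, ξ i ω * S ω ^ 2 ∂μ) / R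
      ≤ R * (ε / 2 / R) + |K| / R := by
        gcongr
        exacts [hc i, (hK i).2.trans (le_abs_self K)]
    _ ≤ ε := by
        rw [mul_div_cancel₀ _ hR.ne']
        linarith
end

theorem stmt12_general {Ω : Type*} {F : MeasurableSpace Ω} (μ : Measure Ω) [IsProbabilityMeasure μ]
    (ξ : ℕ → Ω → ℝ) (S : Ω → ℝ)
    (hmeas : ∀ n, Measurable (ξ n)) (hSmeas : Measurable S)
    (hnn : ∀ n, ∀ᵐ ω ∂μ, 0 ≤ ξ n ω)
    (hint : ∀ n, Integrable (ξ n) μ)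
    (hentint : ∀ n, Integrable (fun ω => ξ n ω * max (Real.log (ξ n ω)) 0) μ)
    (C : ℝ) (hC : ∀ n, ∫ ω, ξ n ω * max (Real.log (ξ n ω)) 0 ∂μ ≤ C)
    (a : ℝ) (ha : 0 < a)
    (hS : Integrable (fun ω => Real.exp (a * (S ω) ^ 2)) μ) :
    Tendsto (fun b : ℝ => ⨆ n : ℕ, ∫ ω in {ω | b ≤ ξ n ω * |S ω|}, ξ n ω ∂μ)
        atTop (nhds 0) ∧
    ((∃ K : ℝ, ∀ n, Integrable (fun ω => ξ n ω * (S ω) ^ 2) μ ∧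
        ∫ ω, ξ n ω * (S ω) ^ 2 ∂μ ≤ K) →
      UniformIntegrable (fun n ω => ξ n ω * S ω) 1 μ) := by
  have hS2 := integrable_sq_of_integrable_exp_mul_sq hSmeas.aestronglyMeasurable ha hS
  set M := 3 / 2 * C + 1 / 2 * ∫ ω, S ω ^ 2 ∂μ
  have htail : ∀ n b, 1 < b → ∫ ω in {ω | b ≤ ξ n ω * |S ω|}, ξ n ω ∂μ ≤ M / log b :=
    fun n b hb => by
      rw [le_div_iff₀ (log_pos hb), mul_comm]
      show _ ≤ 3 / 2 * C + 1 / 2 * ∫ ω, S ω ^ 2 ∂μ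
      linarith [hC n,
        log_mul_setIntegral_le (hmeas n) hSmeas (hnn n) (hint n) (hentint n) hS2 hb]
  have hM : Tendsto (fun b => M / log b) atTop (𝓝 0) :=
    tendsto_const_nhds.div_atTop tendsto_log_atTop
  refine ⟨tendsto_iSup_nhds_zero_of_le ?_ hM, fun ⟨K, hK⟩ =>
    uniformIntegrable_mul_of_forall_setIntegral_le hmeas hSmeas hnn hint hK fun δ hδ => ?_⟩
  · filter_upwards [eventually_gt_atTop 1] with b hb n
    exact ⟨integral_nonneg_of_ae (ae_restrict_of_ae (hnn n)), htail n b hb⟩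
  · obtain ⟨b, hbδ, hb⟩ := ((hM.eventually (ge_mem_nhds hδ)).and (eventually_gt_atTop 1)).exists
    refine ⟨b.toNNReal, fun n => ?_⟩
    rw [Real.coe_toNNReal b (by linarith)]
    exact (htail n b hb).trans hbδ

/-- If ξₙ ≥ 0 with E[ξₙ] = 1 and sup_n E[ξₙ ln⁺ ξₙ] ≤ C < ∞, and E[exp(aS²)] < ∞ for some
a > 0, then sup_n E[ξₙ·1_{ξₙ|S| ≥ b}] → 0 as b → ∞; in particular, if additionally
sup_n E[ξₙS²] < ∞, then the family (ξₙS)ₙ is uniformly integrable. -/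
theorem stmt12 {Ω : Type*} {F : MeasurableSpace Ω} (μ : Measure Ω) [IsProbabilityMeasure μ]
    (ξ : ℕ → Ω → ℝ) (S : Ω → ℝ)
    (hmeas : ∀ n, Measurable (ξ n)) (hSmeas : Measurable S)
    (hnn : ∀ n, ∀ᵐ ω ∂μ, 0 ≤ ξ n ω)
    (hint : ∀ n, Integrable (ξ n) μ) (hone : ∀ n, ∫ ω, ξ n ω ∂μ = 1)
    (hentint : ∀ n, Integrable (fun ω => ξ n ω * max (Real.log (ξ n ω)) 0) μ)
    (C : ℝ) (hC : ∀ n, ∫ ω, ξ n ω * max (Real.log (ξ n ω)) 0 ∂μ ≤ C)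
    (a : ℝ) (ha : 0 < a)
    (hS : Integrable (fun ω => Real.exp (a * (S ω) ^ 2)) μ) :
    Tendsto (fun b : ℝ => ⨆ n : ℕ, ∫ ω in {ω | b ≤ ξ n ω * |S ω|}, ξ n ω ∂μ)
        atTop (nhds 0) ∧
    ((∃ K : ℝ, ∀ n, Integrable (fun ω => ξ n ω * (S ω) ^ 2) μ ∧
        ∫ ω, ξ n ω * (S ω) ^ 2 ∂μ ≤ K) →
      UniformIntegrable (fun n ω => ξ n ω * S ω) 1 μ) :=
  stmt12_general (F := F) μ ξ S hmeas hSmeas hnn hint hentint C hC a ha hS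
end

section
/- For the function f_T(s) = s√ρ·sinh(√ρ(T-Δ)⁺) / (cosh(√ρ(T-Δ)⁺) + Δ√ρ·sinh(√ρ(T-Δ)⁺)) on s ∈ [0, Δ∧T]: the identity exp(∫ₛ^{Δ∧T} uρ/(1 + u√ρ·tanh(√ρ(T-u))) du) · s√ρ·sinh(√ρ(T-Δ)⁺)/(cosh(√ρ(T-s)) + s√ρ·sinh(√ρ(T-s))) = f_T(s) holds for all s ∈ [0, Δ∧T]. -/
/-!
With `D(v) = cosh (r (T - v)) + v r sinh (r (T - v))` one has `D' (v) = -v r² cosh (r (T - v))`,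
and the integrand `u r² / (1 + u r tanh (r (T - u)))` equals `-D'(u) / D(u)`. Hence the exponential
of the integral over `[s, b]` is `D(s) / D(b)`, which cancels the denominator `D(s)` on the left.
For `Δ ≥ T` both sides vanish because `sinh 0 = 0`.
-/

open Real

noncomputable def coshDenom (r T v : ℝ) : ℝ :=
  cosh (r * (T - v)) + v * r * sinh (r * (T - v))

lemma continuous_coshDenom (r T : ℝ) : Continuous (coshDenom r T) := by
  unfold coshDenom
  fun_prop

lemma coshDenom_pos {r T v : ℝ} (hr : 0 ≤ r) (hv : 0 ≤ v) (hvT : v ≤ T) :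
    0 < coshDenom r T v := by
  have hsinh : 0 ≤ sinh (r * (T - v)) := sinh_nonneg_iff.mpr (mul_nonneg hr (by linarith))
  unfold coshDenom
  positivity

lemma hasDerivAt_coshDenom (r T v : ℝ) :
    HasDerivAt (coshDenom r T) (-(v * r ^ 2 * cosh (r * (T - v)))) v := by
  have hinner : HasDerivAt (fun w => r * (T - w)) (-r) v := by
    simpa using ((hasDerivAt_id v).const_sub T).const_mul r
  have hcosh := (hasDerivAt_cosh _).comp v hinner
  have hsinh := (hasDerivAt_sinh _).comp v hinner
  have hlin : HasDerivAt (fun w => w * r) r v := by simpa using (hasDerivAt_id v).mul_const r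
  refine (hcosh.add (hlin.mul hsinh)).congr_deriv ?_
  simp only [Function.comp_apply]
  ring

lemma div_one_add_mul_tanh_eq (r T v : ℝ) :
    v * r ^ 2 / (1 + v * r * tanh (r * (T - v)))
      = v * r ^ 2 * cosh (r * (T - v)) / coshDenom r T v := by
  rw [tanh_eq_sinh_div_cosh, coshDenom]
  field_simp

lemma exp_integral_eq_coshDenom_div {r T s b : ℝ} (hr : 0 ≤ r) (hs : 0 ≤ s) (hsb : s ≤ b)
    (hbT : b ≤ T) :
    exp (∫ u in s..b, u * r ^ 2 / (1 + u * r * tanh (r * (T - u))))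
      = coshDenom r T s / coshDenom r T b := by
  have hpos : ∀ v ∈ Set.uIcc s b, 0 < coshDenom r T v := by
    rw [Set.uIcc_of_le hsb]
    exact fun v hv => coshDenom_pos hr (hs.trans hv.1) (hv.2.trans hbT)
  have hderiv : ∀ v ∈ Set.uIcc s b, HasDerivAt (fun w => -log (coshDenom r T w))
      (v * r ^ 2 * cosh (r * (T - v)) / coshDenom r T v) v := fun v hv =>
    ((hasDerivAt_coshDenom r T v).log (hpos v hv).ne').neg.congr_deriv (by ring)
  have hcont : ContinuousOn (fun v => v * r ^ 2 * cosh (r * (T - v)) / coshDenom r T v)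
      (Set.uIcc s b) :=
    (by fun_prop : Continuous fun v => v * r ^ 2 * cosh (r * (T - v))).continuousOn.div
      (continuous_coshDenom r T).continuousOn fun v hv => (hpos v hv).ne'
  have hint : ∫ u in s..b, u * r ^ 2 / (1 + u * r * tanh (r * (T - u)))
      = log (coshDenom r T s) - log (coshDenom r T b) := by
    simp_rw [div_one_add_mul_tanh_eq]
    rw [intervalIntegral.integral_eq_sub_of_hasDerivAt hderiv hcont.intervalIntegrable]
    ring
  rw [hint, exp_sub, exp_log (hpos s Set.left_mem_uIcc), exp_log (hpos b Set.right_mem_uIcc)]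

theorem stmt15_general (T Δ ρ : ℝ) (hρ : 0 < ρ) :
    ∀ s ∈ Set.Icc (0:ℝ) (min Δ T),
      Real.exp (∫ u in s..(min Δ T),
          u * ρ / (1 + u * Real.sqrt ρ * Real.tanh (Real.sqrt ρ * (T - u))))
        * (s * Real.sqrt ρ * Real.sinh (Real.sqrt ρ * max (T - Δ) 0)
            / (Real.cosh (Real.sqrt ρ * (T - s))
                + s * Real.sqrt ρ * Real.sinh (Real.sqrt ρ * (T - s))))
      = s * Real.sqrt ρ * Real.sinh (Real.sqrt ρ * max (T - Δ) 0)
          / (Real.cosh (Real.sqrt ρ * max (T - Δ) 0)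
              + Δ * Real.sqrt ρ * Real.sinh (Real.sqrt ρ * max (T - Δ) 0)) := by
  rintro s ⟨hs, hsΔT⟩
  rcases le_or_gt T Δ with hTΔ | hΔT
  · simp [max_eq_right (sub_nonpos.mpr hTΔ)]
  rw [min_eq_left hΔT.le] at hsΔT ⊢
  rw [max_eq_left (sub_nonneg.mpr hΔT.le)]
  have hexp := exp_integral_eq_coshDenom_div (sqrt_nonneg ρ) hs hsΔT hΔT.le
  rw [sq_sqrt hρ.le] at hexp
  have hDs := (coshDenom_pos (sqrt_nonneg ρ) hs (hsΔT.trans hΔT.le)).ne'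
  rw [hexp]
  exact div_mul_div_cancel₀' hDs _ _

/-- With f_T(s) = s√ρ·sinh(√ρ(T-Δ)⁺)/(cosh(√ρ(T-Δ)⁺) + Δ√ρ·sinh(√ρ(T-Δ)⁺)), the identity
exp(∫ₛ^{Δ∧T} uρ/(1+u√ρ·tanh(√ρ(T-u))) du) · s√ρ·sinh(√ρ(T-Δ)⁺)/(cosh(√ρ(T-s)) + s√ρ·sinh(√ρ(T-s)))
= f_T(s) holds for all s ∈ [0, Δ∧T]. -/
theorem stmt15 (T Δ ρ : ℝ) (hT : 0 < T) (hΔ : 0 < Δ) (hρ : 0 < ρ) :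
    ∀ s ∈ Set.Icc (0:ℝ) (min Δ T),
      Real.exp (∫ u in s..(min Δ T),
          u * ρ / (1 + u * Real.sqrt ρ * Real.tanh (Real.sqrt ρ * (T - u))))
        * (s * Real.sqrt ρ * Real.sinh (Real.sqrt ρ * max (T - Δ) 0)
            / (Real.cosh (Real.sqrt ρ * (T - s))
                + s * Real.sqrt ρ * Real.sinh (Real.sqrt ρ * (T - s))))
      = s * Real.sqrt ρ * Real.sinh (Real.sqrt ρ * max (T - Δ) 0)
          / (Real.cosh (Real.sqrt ρ * max (T - Δ) 0)
              + Δ * Real.sqrt ρ * Real.sinh (Real.sqrt ρ * max (T - Δ) 0)) :=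
  stmt15_general T Δ ρ hρ
end
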